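/- Assume Property 3. Let Γ' be the directed graph whose vertices are the strongly connected components of Γ, with an edge from component S to component S' (for S ≠ S') whenever some fast reaction in R has its reactant in S and at least one product in S'. Then Γ' contains no directed cycle; that is, Γ' is a directed acyclic graph. -/

import Mathlib

/-- A reaction: a pair (reactants, products) of finite multisets of complexes. -/
abbrev Rxn (C : Type*) := Multiset C × Multiset C

variable {C : Type*}

/-- Edge of the fast-reaction digraph Γ: a fast (1,1) reaction ({x}, {y}) in R. -/
def FastEdge (R : Set (Rxn C)) (x y : C) : Prop :=
  ((({x} : Multiset C), ({y} : Multiset C)) : Rxn C) ∈ R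

/-- Reachability along Γ. -/
def Reach (R : Set (Rxn C)) : C → C → Prop :=
  Relation.ReflTransGen (FastEdge R)

/-- The strongly connected component of Γ containing x. -/
def scc (R : Set (Rxn C)) (x : C) : Set C :=
  {y | Reach R x y ∧ Reach R y x}

/-- Q is a resting set: an SCC of Γ all of whose outgoing fast reactions stay in Q. -/
def IsRestingSet (R : Set (Rxn C)) (Q : Set C) : Prop :=
  (∃ x, Q = scc R x) ∧
    ∀ r ∈ R, r.1.card = 1 → (∀ a ∈ r.1, a ∈ Q) → ∀ b ∈ r.2, b ∈ Q

/-- x is a resting complex: a member of some resting set. -/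
def RestingComplex (R : Set (Rxn C)) (x : C) : Prop :=
  ∃ Q, IsRestingSet R Q ∧ x ∈ Q

/-- One step of a fast transition: replace one occurrence of x by the products of a
fast reaction ({x}, P) ∈ R. -/
def FastStep (R : Set (Rxn C)) (M N : Multiset C) : Prop :=
  ∃ (x : C) (P M' : Multiset C),
    ((({x} : Multiset C), P) : Rxn C) ∈ R ∧ M = x ::ₘ M' ∧ N = P + M'

/-- A fast transition: finitely many fast steps. -/
def FastTransition (R : Set (Rxn C)) : Multiset C → Multiset C → Prop :=
  Relation.ReflTransGen (FastStep R)

/-- The fate predicate Fate(x, F), for x a complex and F a finite multiset of resting sets. -/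
inductive Fate (R : Set (Rxn C)) : C → Multiset (Set C) → Prop
  | resting (x : C) (h : IsRestingSet R (scc R x)) :
      Fate R x {scc R x}
  | step (x a : C) (l : List (C × Multiset (Set C)))
      (hnr : ¬ IsRestingSet R (scc R x))
      (ha : a ∈ scc R x)
      (hr : ((({a} : Multiset C), (↑(l.map Prod.fst) : Multiset C)) : Rxn C) ∈ R)
      (hout : ∃ b ∈ l.map Prod.fst, b ∉ scc R x)
      (hf : ∀ p ∈ l, Fate R p.1 p.2) :
      Fate R x (l.map Prod.snd).sum

/-- B ~ F : the multiset B of complexes represents the multiset F of resting sets,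
i.e. there is a bijective matching pairing each b ∈ B with a Q ∈ F with b ∈ Q. -/
def Represents (B : Multiset C) (F : Multiset (Set C)) : Prop :=
  Multiset.Rel (fun b Q => b ∈ Q) B F

/-- F is a fate of the multiset P of complexes: F = F_1 + ... + F_n where
P = {b_1, ..., b_n} and Fate(b_i, F_i) for each i. -/
def FateM (R : Set (Rxn C)) (P : Multiset C) (F : Multiset (Set C)) : Prop :=
  ∃ l : List (C × Multiset (Set C)),
    P = (↑(l.map Prod.fst) : Multiset C) ∧
    F = (l.map Prod.snd).sum ∧
    ∀ p ∈ l, Fate R p.1 p.2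

/-- The condensed reactions: for each slow reaction ({a₁, a₂}, P) ∈ R and each fate F
of P, the condensed reaction ({SCC(a₁), SCC(a₂)}, F). -/
def IsCondensed (R : Set (Rxn C)) (Ahat Bhat : Multiset (Set C)) : Prop :=
  ∃ (a1 a2 : C) (P : Multiset C),
    ((({a1, a2} : Multiset C), P) : Rxn C) ∈ R ∧
    Ahat = ({scc R a1, scc R a2} : Multiset (Set C)) ∧
    FateM R P Bhat

/-- Every reaction in R is fast (unimolecular) or slow (bimolecular). -/
def FastOrSlow (R : Set (Rxn C)) : Prop :=
  ∀ r ∈ R, r.1.card = 1 ∨ r.1.card = 2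

/-- Reactants and products of every reaction are nonempty. -/
def NonemptyRxns (R : Set (Rxn C)) : Prop :=
  ∀ r ∈ R, r.1 ≠ 0 ∧ r.2 ≠ 0

/-- Property 3: every finite cyclic sequence of fast reactions, in which each reaction
consumes a product of the previous one (cyclically), consists of (1,1) reactions only. -/
def Prop3 (R : Set (Rxn C)) : Prop :=
  ∀ (n : ℕ) (hn : 0 < n) (r : Fin n → Rxn C),
    (∀ i, r i ∈ R ∧ (r i).1.card = 1) →
    (∀ i : Fin n, ∀ a ∈ (r ⟨(i.1 + 1) % n, Nat.mod_lt _ hn⟩).1, a ∈ (r i).2) →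
    ∀ i, (r i).2.card = 1

/-- Property 4: both reactants of every slow reaction are resting complexes. -/
def Prop4 (R : Set (Rxn C)) : Prop :=
  ∀ r ∈ R, r.1.card = 2 → ∀ a ∈ r.1, RestingComplex R a

/-- A resting-state transition from {a₁, a₂} to B: a slow reaction ({a₁, a₂}, P) ∈ R
followed by a fast transition from P to B. -/
def RestingTransition (R : Set (Rxn C)) (a1 a2 : C) (B : Multiset C) : Prop :=
  ∃ P : Multiset C, ((({a1, a2} : Multiset C), P) : Rxn C) ∈ R ∧ FastTransition R P B

/-- One step of a sequence of detailed reactions: remove the reactants of some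
reaction in R from the current multiset and add its products. -/
def DetailedStep (R : Set (Rxn C)) (M N : Multiset C) : Prop :=
  ∃ r ∈ R, ∃ M' : Multiset C, M = r.1 + M' ∧ N = r.2 + M'

/-- One step of a sequence of condensed reactions: remove the reactant multiset of a
condensed reaction from the current multiset of resting sets and add its products. -/
def CondensedStep (R : Set (Rxn C)) (M N : Multiset (Set C)) : Prop :=
  ∃ Ahat Bhat M' : Multiset (Set C),
    IsCondensed R Ahat Bhat ∧ M = Ahat + M' ∧ N = Bhat + M'

/-- Edge of the condensation digraph Γ': from SCC S to SCC S' (S ≠ S') whenever some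
fast reaction in R has its reactant in S and at least one product in S'. -/
def SccEdge (R : Set (Rxn C)) (S S' : Set C) : Prop :=
  S ≠ S' ∧ (∃ x, S = scc R x) ∧ (∃ y, S' = scc R y) ∧
    ∃ r ∈ R, r.1.card = 1 ∧ (∀ a ∈ r.1, a ∈ S) ∧ ∃ b ∈ r.2, b ∈ S'

/-! Say `x` fast-reacts to `y` if some fast reaction consumes `x` and produces `y`. If `x` is
in turn reachable from `y` along such steps, that reaction followed by the path back is a cyclic
sequence of fast reactions, so by Property 3 it is the (1,1) reaction `x → y` of Γ. Hence mutual
reachability along fast-reaction steps is mutual reachability in Γ. A cycle of Γ' makes the two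
ends of its first edge `S → S'` mutually reachable along such steps, so they lie in one SCC and
`S = S'`, contradicting the definition of Γ'. -/

open Relation

theorem exists_seq_of_transGen {α : Type*} {r : α → α → Prop} {a b : α}
    (h : TransGen r a b) :
    ∃ n, 0 < n ∧ ∃ f : ℕ → α, f 0 = a ∧ f n = b ∧ ∀ i < n, r (f i) (f (i + 1)) := by
  induction h with
  | single hab =>
    refine ⟨1, one_pos, fun i => if i = 0 then a else _, rfl, rfl, ?_⟩
    intro i hi
    obtain rfl : i = 0 := by omega
    simpa using hab
  | @tail c d _ hcd ih =>
    obtain ⟨n, hn, f, hf0, hfn, hf⟩ := ih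
    refine ⟨n + 1, n.succ_pos, fun i => if i ≤ n then f i else d, by simp [hf0], by simp, ?_⟩
    intro i hi
    rcases (Nat.le_of_lt_succ hi).lt_or_eq with hlt | rfl
    · simpa [hlt.le, Nat.succ_le_of_lt hlt] using hf i hlt
    · simpa [hfn] using hcd

def FastFeeds (R : Set (Rxn C)) (r s : Rxn C) : Prop :=
  s ∈ R ∧ s.1.card = 1 ∧ ∀ a ∈ s.1, a ∈ r.2

def FastReacts (R : Set (Rxn C)) (x y : C) : Prop :=
  ∃ P, ((({x} : Multiset C), P) : Rxn C) ∈ R ∧ y ∈ P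

section

variable {R : Set (Rxn C)}

theorem Prop3.card_products_eq_one (h3 : Prop3 R) {r : Rxn C}
    (h : TransGen (FastFeeds R) r r) : r.2.card = 1 := by
  obtain ⟨n, hn, f, hf0, hfn, hf⟩ := exists_seq_of_transGen h
  have hwrap : ∀ i < n, f ((i + 1) % n) = f (i + 1) := by
    intro i hi
    rcases (show i + 1 ≤ n from hi).lt_or_eq with hlt | heq
    · rw [Nat.mod_eq_of_lt hlt]
    · rw [heq, Nat.mod_self, hf0, hfn]
  have hfast : ∀ i < n, f i ∈ R ∧ (f i).1.card = 1 := by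
    intro i hi
    obtain ⟨j, hj, hij⟩ : ∃ j < n, f i = f (j + 1) := by
      rcases i with _ | j
      · exact ⟨n - 1, by omega, by rw [Nat.sub_add_cancel hn, hf0, hfn]⟩
      · exact ⟨j, by omega, rfl⟩
    rw [hij]
    exact ⟨(hf j hj).1, (hf j hj).2.1⟩
  have hcycle := h3 n hn (fun i => f i) (fun i => hfast i i.2) (fun i a ha => by
    dsimp only at ha
    rw [hwrap i i.2] at ha
    exact (hf i i.2).2.2 a ha) ⟨0, hn⟩
  exact hf0 ▸ hcycle

theorem transGen_fastFeeds_of_reflTransGen {y z : C} {r : Rxn C} {P : Multiset C}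
    (h : ReflTransGen (FastReacts R) y z) (hy : y ∈ r.2)
    (hz : ((({z} : Multiset C), P) : Rxn C) ∈ R) :
    TransGen (FastFeeds R) r ({z}, P) := by
  induction h using ReflTransGen.head_induction_on generalizing r with
  | refl => exact .single ⟨hz, Multiset.card_singleton z, by simpa using hy⟩
  | head hyw _ ih =>
    obtain ⟨Q, hQ, hw⟩ := hyw
    exact .head ⟨hQ, Multiset.card_singleton _, by simpa using hy⟩ (ih hw)

theorem Prop3.fastEdge_of_fastReacts (h3 : Prop3 R) {x y : C} (hxy : FastReacts R x y)
    (hyx : ReflTransGen (FastReacts R) y x) : FastEdge R x y := by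
  obtain ⟨P, hP, hy⟩ := hxy
  obtain ⟨z, rfl⟩ := Multiset.card_eq_one.mp
    (h3.card_products_eq_one (transGen_fastFeeds_of_reflTransGen hyx hy hP))
  rw [Multiset.mem_singleton] at hy
  subst hy
  exact hP

theorem Prop3.reach_of_reflTransGen (h3 : Prop3 R) {x y : C}
    (hxy : ReflTransGen (FastReacts R) x y) (hyx : ReflTransGen (FastReacts R) y x) :
    Reach R x y := by
  induction hxy using ReflTransGen.head_induction_on with
  | refl => exact .refl
  | head hxw hwy ih =>
    exact .head (h3.fastEdge_of_fastReacts hxw (hwy.trans hyx)) (ih (hyx.tail hxw))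

theorem Reach.reflTransGen_fastReacts {x y : C} (h : Reach R x y) :
    ReflTransGen (FastReacts R) x y :=
  ReflTransGen.mono (fun _ b hab => ⟨{b}, hab, Multiset.mem_singleton_self b⟩) _ _ h

theorem mem_scc_self (x : C) : x ∈ scc R x :=
  ⟨.refl, .refl⟩

theorem scc_eq_of_mem {x y : C} (h : y ∈ scc R x) : scc R x = scc R y := by
  ext z
  exact ⟨fun hz => ⟨h.2.trans hz.1, hz.2.trans h.1⟩,
    fun hz => ⟨h.1.trans hz.1, hz.2.trans h.2⟩⟩

theorem SccEdge.exists_fastReacts {S T : Set C} (h : SccEdge R S T) :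
    ∃ x y, S = scc R x ∧ T = scc R y ∧ FastReacts R x y := by
  obtain ⟨-, ⟨x₀, rfl⟩, ⟨y₀, rfl⟩, ⟨A, P⟩, hr, hcard, hS, y, hy, hyT⟩ := h
  obtain ⟨x, rfl⟩ := Multiset.card_eq_one.mp hcard
  exact ⟨x, y, scc_eq_of_mem (hS x (Multiset.mem_singleton_self x)), scc_eq_of_mem hyT,
    P, hr, hy⟩

theorem reflTransGen_fastReacts_of_transGen_sccEdge {S T : Set C}
    (h : TransGen (SccEdge R) S T) {x y : C} (hx : x ∈ S) (hy : y ∈ T) :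
    ReflTransGen (FastReacts R) x y := by
  induction h generalizing y with
  | single hST =>
    obtain ⟨a, b, rfl, rfl, hab⟩ := hST.exists_fastReacts
    exact hx.2.reflTransGen_fastReacts.trans (.head hab hy.1.reflTransGen_fastReacts)
  | tail _ hTU ih =>
    obtain ⟨a, b, rfl, rfl, hab⟩ := hTU.exists_fastReacts
    exact (ih (mem_scc_self a)).trans (.head hab hy.1.reflTransGen_fastReacts)

end

theorem sccGraph_acyclic_general {C : Type*} (R : Set (Rxn C)) (h3 : Prop3 R) :
    ∀ S : Set C, ¬ Relation.TransGen (SccEdge R) S S := by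
  intro S hS
  obtain ⟨S', hSS', hS'S⟩ := TransGen.head'_iff.mp hS
  have hne : S ≠ S' := hSS'.1
  obtain ⟨x, y, rfl, rfl, hxy⟩ := hSS'.exists_fastReacts
  rcases reflTransGen_iff_eq_or_transGen.mp hS'S with heq | hS'S
  · exact hne heq
  have hyx := reflTransGen_fastReacts_of_transGen_sccEdge hS'S (mem_scc_self y) (mem_scc_self x)
  have hy : y ∈ scc R x :=
    ⟨h3.reach_of_reflTransGen (.single hxy) hyx, h3.reach_of_reflTransGen hyx (.single hxy)⟩
  exact hne (scc_eq_of_mem hy)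

/-- Assuming Property 3, the condensation digraph Γ' on the SCCs of Γ is acyclic. -/
theorem sccGraph_acyclic {C : Type*} [Fintype C] (R : Set (Rxn C))
    (hRfin : R.Finite) (hne : NonemptyRxns R) (h3 : Prop3 R) :
    ∀ S : Set C, ¬ Relation.TransGen (SccEdge R) S S :=
  sccGraph_acyclic_general R h3
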